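/- Let E be a real normed space, K ⊆ E a nontrivial cone with norm-base B_K, and A ⊆ E a nontrivial cone with norm-base B_A. Assume that cl S_{−K} is weakly compact. Then the following are equivalent: (1) cl S_A^0 ∩ cl S_{−K} = ∅; (2) there exists (x*, α) ∈ K^{aw#} with α > 0 such that x*(a) + α‖a‖ > 0 for all a ∈ A \ {0} and x*(k) + α‖k‖ < 0 for all k ∈ (−K) \ {0}; (3) there exists (x*, α) ∈ K^{aw#} such that x*(a) + α‖a‖ > 0 for all a ∈ A \ {0} and x*(k) + α‖k‖ < 0 for all k ∈ (−K) \ {0}. -/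

import Mathlib

open Set

variable {E : Type*} [NormedAddCommGroup E] [NormedSpace ℝ E]

/-- `K` is a cone: contains `0` and is closed under nonnegative scalar multiplication. -/
def IsCone (K : Set E) : Prop :=
  (0 : E) ∈ K ∧ ∀ t : ℝ, 0 ≤ t → ∀ x ∈ K, t • x ∈ K

/-- A cone is nontrivial if it is neither `{0}` nor the whole space. -/
def IsNontrivialCone (K : Set E) : Prop :=
  IsCone K ∧ K ≠ {0} ∧ K ≠ Set.univ

/-- The norm-base of a cone: its intersection with the unit sphere. -/
def normBase (K : Set E) : Set E := {x ∈ K | ‖x‖ = 1}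

/-- Closure of a set with respect to the weak topology `σ(E, E*)`. -/
noncomputable def wClosure (S : Set E) : Set E :=
  (toWeakSpace ℝ E).symm '' closure ((toWeakSpace ℝ E) '' S)

/-- A set is weakly compact if it is compact in the weak topology `σ(E, E*)`. -/
def WeaklyCompact (S : Set E) : Prop :=
  IsCompact ((toWeakSpace ℝ E) '' S)

/-- A set is weakly closed if it equals its weak closure. -/
noncomputable def WeaklyClosed (S : Set E) : Prop :=
  wClosure S = S

/-- The (topological) dual cone `K⁺`. -/
def dualCone (K : Set E) : Set (E →L[ℝ] ℝ) :=
  {f | ∀ k ∈ K, 0 ≤ f k}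

/-- The set `K^#` of functionals strictly positive on `K \ {0}`. -/
def sharpCone (K : Set E) : Set (E →L[ℝ] ℝ) :=
  {f | ∀ k ∈ K, k ≠ 0 → 0 < f k}

/-- The set `K^{w#}` of functionals strictly positive on the weak closure of the norm-base. -/
noncomputable def wSharpCone (K : Set E) : Set (E →L[ℝ] ℝ) :=
  {f | ∀ x ∈ wClosure (normBase K), 0 < f x}

/-- The algebraic interior (core) of a set in a real vector space. -/
def core {X : Type*} [AddCommGroup X] [Module ℝ X] (Ω : Set X) : Set X :=
  {x ∈ Ω | ∀ v : X, ∃ ε > 0, ∀ t ∈ Set.Icc (0 : ℝ) ε, x + t • v ∈ Ω}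

/-- The augmented dual cone `K^{a+}`. -/
def augDualCone (K : Set E) : Set ((E →L[ℝ] ℝ) × ℝ) :=
  {p | 0 ≤ p.2 ∧ ∀ y ∈ K, 0 ≤ p.1 y - p.2 * ‖y‖}

/-- The set `K^{a#}`. -/
def augSharpCone (K : Set E) : Set ((E →L[ℝ] ℝ) × ℝ) :=
  {p | 0 ≤ p.2 ∧ p.1 ∈ sharpCone K ∧ ∀ y ∈ K, y ≠ 0 → 0 < p.1 y - p.2 * ‖y‖}

/-- The set `K^{aw#}`. -/
noncomputable def augWSharpCone (K : Set E) : Set ((E →L[ℝ] ℝ) × ℝ) :=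
  {p | 0 ≤ p.2 ∧ p.1 ∈ sharpCone K ∧ ∀ y ∈ wClosure (normBase K), p.2 < p.1 y}

/-- `S_C = conv(B_C)`. -/
noncomputable def convBase (C : Set E) : Set E := convexHull ℝ (normBase C)

/-- `S_C^0 = conv({0} ∪ B_C)`. -/
noncomputable def convBase0 (C : Set E) : Set E := convexHull ℝ ({0} ∪ normBase C)

/-!
(1) ⇒ (2): the closed convex set `cl S_A^0` is weakly closed, so it is strictly separated from
the weakly compact convex set `cl S_{−K}` in the weak topology: some `f ∈ E*` and `u < v` satisfy
`f < u` on `cl S_{−K}` and `f > v` on `cl S_A^0`. As `0 ∈ cl S_A^0`, `v < 0`, so any `α` with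
`u < −α < v` is positive; positive homogeneity turns the bounds on the norm-bases into the bounds
for `f + α‖·‖`, and `cl_w B_K ⊆ cl S_K = −cl S_{−K}` gives `(f, α) ∈ K^{aw#}`.

(3) ⇒ (1): `cl_w B_K` is a weakly closed subset of the weakly compact set `−cl S_{−K}`, so `f`
attains a minimum `m > α` on it. Then `f ≤ −m < −α` on `cl S_{−K}` while `f ≥ −α` on
`cl S_A^0`.
-/

noncomputable instance : LocallyConvexSpace ℝ (WeakSpace ℝ E) :=
  WeakBilin.locallyConvexSpace (B := (topDualPairing ℝ E).flip)

section WeakTopology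

lemma subset_wClosure (S : Set E) : S ⊆ wClosure S := fun x hx =>
  ⟨toWeakSpace ℝ E x, subset_closure ⟨x, hx, rfl⟩, (toWeakSpace ℝ E).symm_apply_apply x⟩

lemma toWeakSpace_image_wClosure (S : Set E) :
    toWeakSpace ℝ E '' wClosure S = closure (toWeakSpace ℝ E '' S) :=
  (toWeakSpace ℝ E).image_symm_image _

lemma Convex.isClosed_toWeakSpace_image {T : Set E} (hT : Convex ℝ T) (hTc : IsClosed T) :
    IsClosed (toWeakSpace ℝ E '' T) := by
  rw [← hTc.closure_eq, hT.toWeakSpace_closure ℝ]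
  exact isClosed_closure

lemma Convex.wClosure_subset {S T : Set E} (hT : Convex ℝ T) (hTc : IsClosed T) (hST : S ⊆ T) :
    wClosure S ⊆ T := by
  rintro _ ⟨y, hy, rfl⟩
  obtain ⟨x, hx, rfl⟩ := closure_minimal (image_mono hST) (hT.isClosed_toWeakSpace_image hTc) hy
  rwa [(toWeakSpace ℝ E).symm_apply_apply]

lemma WeaklyCompact.neg {S : Set E} (hS : WeaklyCompact S) : WeaklyCompact (-S) := by
  rw [WeaklyCompact, Set.image_neg (toWeakSpace ℝ E)]
  exact IsCompact.neg hS

lemma WeaklyCompact.wClosure_of_subset {S T : Set E} (hT : WeaklyCompact T) (hTconv : Convex ℝ T)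
    (hTc : IsClosed T) (hST : S ⊆ T) : WeaklyCompact (wClosure S) := by
  rw [WeaklyCompact, toWeakSpace_image_wClosure]
  exact hT.of_isClosed_subset isClosed_closure
    (closure_minimal (image_mono hST) (hTconv.isClosed_toWeakSpace_image hTc))

lemma WeaklyCompact.exists_isMinOn {S : Set E} (hS : WeaklyCompact S) (hne : S.Nonempty)
    (f : E →L[ℝ] ℝ) : ∃ y ∈ S, ∀ z ∈ S, f y ≤ f z := by
  obtain ⟨_, ⟨y, hy, rfl⟩, hmin⟩ := IsCompact.exists_isMinOn hS (hne.image _)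
    (WeakBilin.eval_continuous (topDualPairing ℝ E).flip f).continuousOn
  exact ⟨y, hy, fun z hz => hmin ⟨z, hz, rfl⟩⟩

theorem geometric_hahn_banach_weaklyCompact_closed {S T : Set E} (hS : Convex ℝ S)
    (hSc : WeaklyCompact S) (hT : Convex ℝ T) (hTc : IsClosed T) (disj : Disjoint S T) :
    ∃ (f : E →L[ℝ] ℝ) (u v : ℝ), (∀ a ∈ S, f a < u) ∧ u < v ∧ ∀ b ∈ T, v < f b := by
  obtain ⟨F, u, v, hFS, huv, hFT⟩ := geometric_hahn_banach_compact_closed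
    (hS.linear_image (toWeakSpace ℝ E).toLinearMap) hSc
    (hT.linear_image (toWeakSpace ℝ E).toLinearMap) (hT.isClosed_toWeakSpace_image hTc)
    ((disjoint_image_iff (toWeakSpace ℝ E).injective).2 disj)
  exact ⟨F.comp (toWeakSpaceCLM ℝ E), u, v, fun a ha => hFS _ ⟨a, ha, rfl⟩, huv,
    fun b hb => hFT _ ⟨b, hb, rfl⟩⟩

end WeakTopology

section Cones

lemma normBase_neg {F : Type*} [NormedAddCommGroup F] (K : Set F) :
    normBase (-K) = -normBase K := by
  ext x
  simp [normBase]

lemma closure_convBase_neg (K : Set E) : closure (convBase (-K)) = -closure (convBase K) := by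
  rw [convBase, normBase_neg, convexHull_neg, ← neg_closure, convBase]

lemma IsCone.neg {K : Set E} (hK : IsCone K) : IsCone (-K) :=
  ⟨by simpa using hK.1, fun t ht x hx => by simpa [smul_neg] using hK.2 t ht _ hx⟩

lemma IsCone.inv_norm_smul_mem_normBase {K : Set E} (hK : IsCone K) {x : E} (hx : x ∈ K)
    (hx0 : x ≠ 0) : ‖x‖⁻¹ • x ∈ normBase K :=
  ⟨hK.2 _ (inv_nonneg.2 (norm_nonneg x)) x hx, norm_smul_inv_norm (𝕜 := ℝ) hx0⟩

lemma IsCone.mul_norm_lt_apply {C : Set E} (hC : IsCone C) {f : E →L[ℝ] ℝ} {c : ℝ}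
    (h : ∀ b ∈ normBase C, c < f b) {x : E} (hx : x ∈ C) (hx0 : x ≠ 0) : c * ‖x‖ < f x := by
  have hnorm : 0 < ‖x‖ := norm_pos_iff.2 hx0
  have hfx : f x = ‖x‖ * f (‖x‖⁻¹ • x) := by
    rw [map_smul, smul_eq_mul, ← mul_assoc, mul_inv_cancel₀ hnorm.ne', one_mul]
  rw [hfx, mul_comm]
  exact mul_lt_mul_of_pos_left (h _ (hC.inv_norm_smul_mem_normBase hx hx0)) hnorm

lemma IsCone.apply_lt_mul_norm {C : Set E} (hC : IsCone C) {f : E →L[ℝ] ℝ} {c : ℝ}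
    (h : ∀ b ∈ normBase C, f b < c) {x : E} (hx : x ∈ C) (hx0 : x ≠ 0) : f x < c * ‖x‖ := by
  have := hC.mul_norm_lt_apply (f := -f) (c := -c) (fun b hb => by simpa using h b hb) hx hx0
  simp only [neg_apply, neg_mul] at this
  linarith

lemma closure_convexHull_subset_setOf_le {S : Set E} {f : E →L[ℝ] ℝ} {c : ℝ}
    (h : ∀ x ∈ S, f x ≤ c) : closure (convexHull ℝ S) ⊆ {x | f x ≤ c} :=
  closure_minimal (convexHull_min h (convex_halfSpace_le f.isLinear c))
    (isClosed_le f.continuous continuous_const)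

lemma closure_convexHull_subset_setOf_ge {S : Set E} {f : E →L[ℝ] ℝ} {c : ℝ}
    (h : ∀ x ∈ S, c ≤ f x) : closure (convexHull ℝ S) ⊆ {x | c ≤ f x} :=
  closure_minimal (convexHull_min h (convex_halfSpace_ge f.isLinear c))
    (isClosed_le continuous_const f.continuous)

end Cones

section Separation

variable {K A : Set E}

theorem exists_augWSharpCone_of_closure_inter_eq_empty (hK : IsCone K) (hA : IsCone A)
    (hcomp : WeaklyCompact (closure (convBase (-K))))
    (h : closure (convBase0 A) ∩ closure (convBase (-K)) = ∅) :
    ∃ f : E →L[ℝ] ℝ, ∃ α : ℝ, (f, α) ∈ augWSharpCone K ∧ 0 < α ∧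
      (∀ a ∈ A, a ≠ 0 → 0 < f a + α * ‖a‖) ∧
      (∀ k ∈ (-K : Set E), k ≠ 0 → f k + α * ‖k‖ < 0) := by
  obtain ⟨f, u, v, hfK, huv, hfA⟩ := geometric_hahn_banach_weaklyCompact_closed
    (convex_convexHull ℝ _).closure hcomp (convex_convexHull ℝ _).closure isClosed_closure
    (disjoint_iff_inter_eq_empty.2 (by rwa [inter_comm]))
  have hv : v < 0 := by
    simpa using hfA 0 (subset_closure (subset_convexHull ℝ _ (Or.inl rfl)))
  obtain ⟨α, huα, hαv⟩ : ∃ α : ℝ, u < -α ∧ -α < v := ⟨-(u + v) / 2, by linarith, by linarith⟩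
  have hα : 0 < α := by linarith
  have hKneg : ∀ k ∈ -K, k ≠ 0 → f k + α * ‖k‖ < 0 := fun k hk hk0 => by
    have := hK.neg.apply_lt_mul_norm (c := -α)
      (fun b hb => (hfK b (subset_closure (subset_convexHull ℝ _ hb))).trans (by linarith)) hk hk0
    linarith
  refine ⟨f, α, ⟨hα.le, fun k hk hk0 => ?_, fun y hy => ?_⟩, hα, fun a ha ha0 => ?_, hKneg⟩
  · have := hKneg (-k) (neg_mem_neg.2 hk) (neg_ne_zero.2 hk0)
    rw [map_neg, norm_neg] at this
    nlinarith [norm_pos_iff.2 hk0]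
  · have hyK : -y ∈ closure (convBase (-K)) := by
      rw [closure_convBase_neg]
      exact neg_mem_neg.2 ((convex_convexHull ℝ _).closure.wClosure_subset isClosed_closure
        (subset_closure.trans' (subset_convexHull ℝ _)) hy)
    have := hfK _ hyK
    rw [map_neg] at this
    linarith
  · have := hA.mul_norm_lt_apply (c := -α) (fun b hb => lt_trans (by linarith)
      (hfA b (subset_closure (subset_convexHull ℝ _ (Or.inr hb))))) ha ha0
    linarith

theorem closure_convBase0_inter_closure_convBase_neg_eq_empty
    (hcomp : WeaklyCompact (closure (convBase (-K)))) {f : E →L[ℝ] ℝ} {α : ℝ}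
    (hfα : (f, α) ∈ augWSharpCone K) (hfA : ∀ a ∈ A, a ≠ 0 → 0 < f a + α * ‖a‖) :
    closure (convBase0 A) ∩ closure (convBase (-K)) = ∅ := by
  refine eq_empty_iff_forall_notMem.2 fun x ⟨hxA, hxK⟩ => ?_
  have hne : (normBase K).Nonempty := by
    rw [← nonempty_neg, ← normBase_neg]
    contrapose! hxK
    simp [convBase, hxK]
  have hcompK : WeaklyCompact (wClosure (normBase K)) := by
    refine WeaklyCompact.wClosure_of_subset (T := closure (convBase K)) ?_
      (convex_convexHull ℝ _).closure isClosed_closure (subset_closure.trans' (subset_convexHull ℝ _))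
    simpa [closure_convBase_neg] using hcomp.neg
  obtain ⟨y₀, hy₀, hmin⟩ := hcompK.exists_isMinOn (hne.mono (subset_wClosure _)) f
  have hle : f x ≤ -f y₀ := closure_convexHull_subset_setOf_le (fun k hk => by
    have := hmin (-k) (subset_wClosure _ (by rwa [normBase_neg, mem_neg] at hk))
    rw [map_neg] at this
    linarith) hxK
  have hge : -α ≤ f x := closure_convexHull_subset_setOf_ge (S := {0} ∪ normBase A) (by
    rintro a (rfl | ⟨ha, ha1⟩)
    · simpa using hfα.1
    · have := hfA a ha (norm_ne_zero_iff.1 (by rw [ha1]; exact one_ne_zero))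
      rw [ha1] at this
      linarith) hxA
  linarith [hfα.2.2 y₀ hy₀]

end Separation

theorem stmt15 (K A : Set E) (hK : IsNontrivialCone K) (hA : IsNontrivialCone A)
    (hcomp : WeaklyCompact (closure (convBase (-K)))) :
    List.TFAE [
      closure (convBase0 A) ∩ closure (convBase (-K)) = ∅,
      (∃ f : E →L[ℝ] ℝ, ∃ α : ℝ, (f, α) ∈ augWSharpCone K ∧ 0 < α ∧
        (∀ a ∈ A, a ≠ 0 → 0 < f a + α * ‖a‖) ∧
        (∀ k ∈ (-K : Set E), k ≠ 0 → f k + α * ‖k‖ < 0)),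
      (∃ f : E →L[ℝ] ℝ, ∃ α : ℝ, (f, α) ∈ augWSharpCone K ∧
        (∀ a ∈ A, a ≠ 0 → 0 < f a + α * ‖a‖) ∧
        (∀ k ∈ (-K : Set E), k ≠ 0 → f k + α * ‖k‖ < 0))] := by
  tfae_have 1 → 2 := exists_augWSharpCone_of_closure_inter_eq_empty hK.1 hA.1 hcomp
  tfae_have 2 → 3 := fun ⟨f, α, hfα, _, hfA, hfK⟩ => ⟨f, α, hfα, hfA, hfK⟩
  tfae_have 3 → 1 := fun ⟨_, _, hfα, hfA, _⟩ =>
    closure_convBase0_inter_closure_convBase_neg_eq_empty hcomp hfα hfA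
  tfae_finish
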